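/- For every θ ∈ (0,1), every p ∈ [1,∞), there exist constants C = C(p,θ) > 0 and δ₀ = δ₀(p,θ) > 0 with the following property: if 0 < δ ≤ δ₀ and (I, ψ, m) satisfy the centering condition m((-∞, a_θ] ∩ I) = θ and the δ-deficit condition e^{-ψ(a_θ)} ≤ e^{-ψ_g(a_θ)} + δ, then ∫_I max(e^{ψ_g(x) − ψ(x)} − 1, 0)^p γ(dx) ≤ C·δ. -/

import Mathlib

open MeasureTheory Real Set

/-- `gaussPsi x = x²/2 + (1/2)·log(2π)`, so that the standard Gaussian measure
is `exp (-gaussPsi x) dx`. -/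
noncomputable def gaussPsi (x : ℝ) : ℝ := x ^ 2 / 2 + Real.log (2 * π) / 2

/-- The standard Gaussian measure `γ(dx) = (2π)^{-1/2} exp(-x²/2) dx` on `ℝ`. -/
noncomputable def gauss : Measure ℝ :=
  MeasureTheory.volume.withDensity fun x => ENNReal.ofReal (Real.exp (-gaussPsi x))

/-!
Write `ψ = gaussPsi + φ`. The 1-convexity of `ψ` makes `φ` convex, `m = e^{-φ} γ` on `I`, and the
deficit condition reads `e^{-φ(a)} ≤ 1 + e^{gaussPsi a} δ`. If `φ` dropped from `a` at slope `s`
towards some `x`, convexity would make it rise at slope at least `s` on the other side of `a`; there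
`m` would lose mass of order `s · γ(half-line at distance 1 from a)` compared with `γ`, while the
centering gives both sides the same `m`- and `γ`-mass. Hence `s = O(δ)`, so
`-φ(x) ≤ Cδ (1 + |x - a|)` on `I` and `[e^{-φ} - 1]₊ ≤ δ e^{C (1 + |x - a|)}`, whose `p`-th power
is `γ`-integrable.
-/

open ProbabilityTheory

lemma mul_le_two_mul_of_one_sub_exp_neg_mul_le {s b c : ℝ} (hs : 0 ≤ s) (hb : 0 ≤ b)
    (h : (1 - exp (-s)) * b ≤ c) (hcb : 2 * c ≤ b) : s * b ≤ 2 * c := by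
  have hexp : s / (1 + s) ≤ 1 - exp (-s) := by
    rw [exp_neg, ← one_div, sub_div' (by positivity), one_mul, div_le_div_iff₀ (by positivity)
      (exp_pos s)]
    nlinarith [add_one_le_exp s]
  have : s * b ≤ (1 + s) * c := by
    rw [← div_le_iff₀' (by positivity), mul_div_right_comm]
    exact (mul_le_mul_of_nonneg_right hexp hb).trans h
  nlinarith

lemma max_exp_sub_one_le {u w δ : ℝ} (hδ0 : 0 ≤ δ) (hδ1 : δ ≤ 1) (hu : u ≤ δ * w) :
    max (exp u - 1) 0 ≤ δ * exp w := by
  refine max_le ?_ (by positivity)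
  have := convexOn_exp.2 (mem_univ 0) (mem_univ w) (sub_nonneg.2 hδ1) hδ0 (by ring)
  simp only [smul_eq_mul, mul_zero, zero_add, exp_zero, mul_one] at this
  linarith [exp_le_exp.2 hu]

lemma exp_neg_sub_le_one_add_exp_mul {u v δ : ℝ} (h : exp (-u) ≤ exp (-v) + δ) :
    exp (-(u - v)) ≤ 1 + exp v * δ := by
  rw [neg_sub, sub_eq_add_neg, exp_add]
  calc exp v * exp (-u) ≤ exp v * (exp (-v) + δ) := by gcongr
    _ = 1 + exp v * δ := by rw [mul_add, ← exp_add, add_neg_cancel, exp_zero]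

lemma indicator_ofReal_exp_neg_le {α : Type*} {I : Set α} {φ : α → ℝ} {c ε t : ℝ}
    (hc : exp (-c) ≤ 1 + ε) {x : α} (hx : x ∈ I → c + t ≤ φ x) :
    I.indicator (fun x => ENNReal.ofReal (exp (-φ x))) x
      ≤ ENNReal.ofReal ((1 + ε) * exp (-t)) := by
  by_cases hxI : x ∈ I
  · rw [indicator_of_mem hxI]
    refine ENNReal.ofReal_le_ofReal ?_
    calc exp (-φ x) ≤ exp (-c) * exp (-t) := by
          rw [← exp_add]; exact exp_le_exp.2 (by linarith [hx hxI])
      _ ≤ (1 + ε) * exp (-t) := mul_le_mul_of_nonneg_right hc (exp_pos _).le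
  · simp [indicator_of_notMem hxI]

section

variable {α : Type*} [MeasurableSpace α] {μ : Measure α}

lemma setIntegral_exp_neg_mul_le [IsFiniteMeasure μ] {S T : Set α} (hS : MeasurableSet S)
    (hT : MeasurableSet T) (hTS : T ⊆ S) {d : α → ℝ} (hd : Measurable d)
    (hd0 : ∀ x ∈ S, 0 ≤ d x) (hd1 : ∀ x ∈ T, 1 ≤ d x) {s : ℝ} (hs : 0 ≤ s) :
    ∫ x in S, exp (-(s * d x)) ∂μ ≤ μ.real S - (1 - exp (-s)) * μ.real T := by
  have hle : ∀ x ∈ S, exp (-(s * d x)) ≤ 1 := fun x hx =>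
    exp_le_one_iff.2 (neg_nonpos.2 (mul_nonneg hs (hd0 x hx)))
  have hint : IntegrableOn (fun x => exp (-(s * d x))) S μ := by
    refine (integrable_const (1 : ℝ)).mono' (by fun_prop) ?_
    filter_upwards [ae_restrict_mem hS] with x hx
    rw [Real.norm_of_nonneg (exp_pos _).le]
    exact hle x hx
  have hT_le : ∫ x in T, exp (-(s * d x)) ∂μ ≤ exp (-s) * μ.real T := by
    rw [mul_comm, ← smul_eq_mul, ← setIntegral_const]
    refine setIntegral_mono_on (hint.mono_set hTS) (integrable_const _) hT fun x hx => ?_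
    exact exp_le_exp.2 (by nlinarith [hd1 x hx])
  have hST_le : ∫ x in S \ T, exp (-(s * d x)) ∂μ ≤ μ.real (S \ T) := by
    rw [← mul_one (μ.real _), ← smul_eq_mul, ← setIntegral_const]
    exact setIntegral_mono_on (hint.mono_set sdiff_subset) (integrable_const _) (hS.diff hT)
      fun x hx => hle x hx.1
  have hsplit := integral_inter_add_sdiff hT hint
  rw [inter_eq_right.2 hTS] at hsplit
  rw [measureReal_sdiff hTS hT] at hST_le
  linarith

lemma withDensity_apply_le_ofReal_setIntegral {ρ : α → ENNReal} {g : α → ℝ} {S : Set α}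
    (hS : MeasurableSet S) (hg : IntegrableOn g S μ) (hg0 : ∀ x ∈ S, 0 ≤ g x)
    (hρ : ∀ x ∈ S, ρ x ≤ ENNReal.ofReal (g x)) :
    μ.withDensity ρ S ≤ ENNReal.ofReal (∫ x in S, g x ∂μ) := by
  rw [withDensity_apply _ hS, ofReal_integral_eq_lintegral_ofReal hg
    ((ae_restrict_iff' hS).2 (ae_of_all _ hg0))]
  exact setLIntegral_mono' hS hρ

lemma le_two_mul_div_of_density_le [IsProbabilityMeasure μ] {ρ : α → ENNReal} {S T : Set α}
    (hS : MeasurableSet S) (hT : MeasurableSet T) (hTS : T ⊆ S) {d : α → ℝ} (hd : Measurable d)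
    (hd0 : ∀ x ∈ S, 0 ≤ d x) (hd1 : ∀ x ∈ T, 1 ≤ d x) {ε s G : ℝ} (hε : 0 ≤ ε) (hs : 0 ≤ s)
    (hρ : ∀ x ∈ S, ρ x ≤ ENNReal.ofReal ((1 + ε) * exp (-(s * d x))))
    (hmass : μ S ≤ μ.withDensity ρ S) (hG : 0 < G) (hGT : G ≤ μ.real T) (hεG : 2 * ε ≤ G) :
    s ≤ 2 * ε / G := by
  have hint : IntegrableOn (fun x => (1 + ε) * exp (-(s * d x))) S μ := by
    refine ((integrable_const (1 + ε)).mono' (by fun_prop) ?_)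
    filter_upwards [ae_restrict_mem hS] with x hx
    rw [Real.norm_of_nonneg (by positivity)]
    exact mul_le_of_le_one_right (by linarith)
      (exp_le_one_iff.2 (neg_nonpos.2 (mul_nonneg hs (hd0 x hx))))
  have hmass' : μ.real S ≤ (1 + ε) * ∫ x in S, exp (-(s * d x)) ∂μ := by
    rw [← integral_const_mul]
    refine ENNReal.toReal_le_of_le_ofReal (integral_nonneg fun x => by positivity) ?_
    exact hmass.trans (withDensity_apply_le_ofReal_setIntegral hS hint
      (fun x _ => by positivity) hρ)
  have hdecay := setIntegral_exp_neg_mul_le (μ := μ) hS hT hTS hd hd0 hd1 hs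
  have hS1 : μ.real S ≤ 1 := measureReal_le_one
  have hT0 : 0 ≤ (1 - exp (-s)) * μ.real T :=
    mul_nonneg (sub_nonneg.2 (exp_le_one_iff.2 (neg_nonpos.2 hs))) measureReal_nonneg
  have hsT : s * μ.real T ≤ 2 * (ε * μ.real S) :=
    mul_le_two_mul_of_one_sub_exp_neg_mul_le hs measureReal_nonneg (by nlinarith) (by nlinarith)
  rw [le_div_iff₀ hG]
  nlinarith

lemma withDensity_indicator_apply_compl {I : Set α} (hI : MeasurableSet I) (f : α → ENNReal) :
    μ.withDensity (I.indicator f) Iᶜ = 0 := by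
  rw [withDensity_indicator hI]
  exact withDensity_absolutelyContinuous _ _ (by simp [Measure.restrict_apply hI.compl])

lemma setIntegral_max_exp_sub_one_rpow_le {I : Set α} (hI : MeasurableSet I) {u w : α → ℝ}
    {δ p : ℝ} (hδ0 : 0 ≤ δ) (hδ1 : δ ≤ 1) (hp : 1 ≤ p) (hu : ∀ x ∈ I, u x ≤ δ * w x)
    (hint : Integrable (fun x => exp (p * w x)) μ) :
    ∫ x in I, max (exp (u x) - 1) 0 ^ p ∂μ ≤ δ * ∫ x, exp (p * w x) ∂μ := by
  have hpow : ∀ x ∈ I, max (exp (u x) - 1) 0 ^ p ≤ δ * exp (p * w x) := fun x hx =>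
    calc max (exp (u x) - 1) 0 ^ p ≤ (δ * exp (w x)) ^ p :=
          rpow_le_rpow (le_max_right _ _) (max_exp_sub_one_le hδ0 hδ1 (hu x hx)) (by linarith)
      _ = δ ^ p * exp (p * w x) := by
          rw [mul_rpow hδ0 (exp_pos _).le, ← exp_mul, mul_comm (w x)]
      _ ≤ δ * exp (p * w x) := mul_le_mul_of_nonneg_right
          ((rpow_le_rpow_of_exponent_ge' hδ0 hδ1 zero_le_one hp).trans_eq (rpow_one δ))
          (exp_pos _).le
  calc ∫ x in I, max (exp (u x) - 1) 0 ^ p ∂μ ≤ ∫ x in I, δ * exp (p * w x) ∂μ :=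
        integral_mono_of_nonneg (ae_of_all _ fun x => rpow_nonneg (le_max_right _ _) p)
          (hint.const_mul δ).integrableOn ((ae_restrict_iff' hI).2 (ae_of_all _ hpow))
    _ ≤ ∫ x, δ * exp (p * w x) ∂μ :=
        setIntegral_le_integral (hint.const_mul δ) (ae_of_all _ fun x => by positivity)
    _ = δ * ∫ x, exp (p * w x) ∂μ := integral_const_mul δ _

end

lemma strongConvexOn_of_forall_mem_Ioo {I : Set ℝ} {m : ℝ} {f : ℝ → ℝ} (hI : Convex ℝ I)
    (hf : ∀ x ∈ I, ∀ y ∈ I, ∀ t ∈ Ioo (0:ℝ) 1,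
      f ((1 - t) * x + t * y) ≤ (1 - t) * f x + t * f y - m / 2 * (1 - t) * t * |x - y| ^ 2) :
    StrongConvexOn I m f := by
  refine ⟨hI, fun x hx y hy s t hs ht hst => ?_⟩
  obtain rfl : s = 1 - t := by linarith
  rcases ht.eq_or_lt with rfl | ht
  · simp
  rcases hs.eq_or_lt with hs | hs
  · obtain rfl : t = 1 := by linarith
    simp
  have := hf x hx y hy t ⟨ht, by linarith⟩
  simp only [smul_eq_mul, Real.norm_eq_abs]
  linarith

lemma ConvexOn.add_slope_mul_sub_le {I : Set ℝ} {f : ℝ → ℝ} (hf : ConvexOn ℝ I f) {a x z : ℝ}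
    (ha : a ∈ I) (hx : x ∈ I) (hz : z ∈ I) (hxz : x ≤ a ∧ a < z ∨ z < a ∧ a ≤ x) :
    f a + slope f a z * (x - a) ≤ f x := by
  rcases eq_or_ne x a with rfl | hxa
  · simp
  have hmono := hf.slope_mono ha
  rcases hxz with ⟨hxa', haz⟩ | ⟨hza, hax⟩
  · have hxa' : x < a := lt_of_le_of_ne hxa' hxa
    have h := hmono ⟨hx, hxa'.ne⟩ ⟨hz, haz.ne'⟩ (by linarith)
    rw [slope_def_field f a x, div_le_iff_of_neg (by linarith)] at h
    linarith
  · have hax : a < x := lt_of_le_of_ne hax (Ne.symm hxa)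
    have h := hmono ⟨hz, hza.ne⟩ ⟨hx, hax.ne'⟩ (by linarith)
    rw [slope_def_field f a x, le_div_iff₀ (by linarith)] at h
    linarith

lemma sub_le_mul_abs_of_density_le {μ : Measure ℝ} [IsProbabilityMeasure μ] {I S T : Set ℝ}
    {φ d : ℝ → ℝ} {a x ε G s : ℝ} (hS : MeasurableSet S) (hT : MeasurableSet T) (hTS : T ⊆ S)
    (hd : Measurable d) (hd0 : ∀ y ∈ S, 0 ≤ d y) (hd1 : ∀ y ∈ T, 1 ≤ d y) (hε : 0 ≤ ε)
    (hφa : exp (-φ a) ≤ 1 + ε) (hsec : ∀ y ∈ S, y ∈ I → φ a + s * d y ≤ φ y)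
    (hmass : μ S ≤ μ.withDensity (I.indicator fun x => ENNReal.ofReal (exp (-φ x))) S)
    (hG : 0 < G) (hGT : G ≤ μ.real T) (hεG : 2 * ε ≤ G) (hdiff : φ a - φ x = s * |x - a|) :
    φ a - φ x ≤ ε * (2 / G * |x - a|) := by
  rw [hdiff]
  rcases le_or_gt s 0 with hs | hs
  · exact (mul_nonpos_of_nonpos_of_nonneg hs (abs_nonneg _)).trans (by positivity)
  have hsG := le_two_mul_div_of_density_le hS hT hTS hd hd0 hd1 hε hs.le
    (fun y hy => indicator_ofReal_exp_neg_le hφa (hsec y hy)) hmass hG hGT hεG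
  calc s * |x - a| ≤ 2 * ε / G * |x - a| := by gcongr
    _ = ε * (2 / G * |x - a|) := by ring

lemma ConvexOn.neg_le_mul_of_withDensity_Iic_eq {μ : Measure ℝ} [IsProbabilityMeasure μ]
    {I : Set ℝ} {φ : ℝ → ℝ} (hφ : ConvexOn ℝ I φ) {a ε G : ℝ} (ha : a ∈ I)
    [IsProbabilityMeasure (μ.withDensity (I.indicator fun x => ENNReal.ofReal (exp (-φ x))))]
    (hcen : μ.withDensity (I.indicator fun x => ENNReal.ofReal (exp (-φ x))) (Iic a) = μ (Iic a))
    (hε : 0 ≤ ε) (hφa : exp (-φ a) ≤ 1 + ε) (hG : 0 < G) (hGl : G ≤ μ.real (Iic (a - 1)))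
    (hGr : G ≤ μ.real (Ioi (a + 1))) (hεG : 2 * ε ≤ G) {x : ℝ} (hx : x ∈ I) :
    -φ x ≤ ε * (1 + 2 / G * |x - a|) := by
  have hcen' : μ.withDensity (I.indicator fun x => ENNReal.ofReal (exp (-φ x))) (Ioi a)
      = μ (Ioi a) := by
    rw [← compl_Iic, prob_compl_eq_one_sub measurableSet_Iic,
      prob_compl_eq_one_sub measurableSet_Iic, hcen]
  have hslope : φ a - φ x ≤ ε * (2 / G * |x - a|) := by
    rcases lt_trichotomy x a with hxa | rfl | hxa
    · refine sub_le_mul_abs_of_density_le measurableSet_Ioi measurableSet_Ioi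
        (Ioi_subset_Ioi (by linarith)) (d := fun y => y - a) (by fun_prop)
        (fun y hy => by simp only [mem_Ioi] at hy; linarith)
        (fun y hy => by simp only [mem_Ioi] at hy; linarith) hε hφa
        (fun y hy hyI => hφ.add_slope_mul_sub_le ha hyI hx (Or.inr ⟨hxa, le_of_lt hy⟩))
        hcen'.ge hG hGr hεG ?_
      rw [abs_of_neg (sub_neg.2 hxa), slope_def_field]
      field_simp [(sub_neg.2 hxa).ne]
      ring
    · simp
    · refine sub_le_mul_abs_of_density_le measurableSet_Iic measurableSet_Iic
        (Iic_subset_Iic.2 (by linarith)) (d := fun y => a - y) (s := -slope φ a x) (by fun_prop)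
        (fun y hy => by simp only [mem_Iic] at hy; linarith)
        (fun y hy => by simp only [mem_Iic] at hy; linarith) hε hφa
        (fun y hy hyI => by linarith [hφ.add_slope_mul_sub_le ha hyI hx (Or.inl ⟨hy, hxa⟩)])
        hcen.ge hG hGl hεG ?_
      rw [abs_of_pos (sub_pos.2 hxa), slope_def_field]
      field_simp [(sub_pos.2 hxa).ne']
      ring
  have hφa' : -φ a ≤ ε := exp_le_exp.1 (hφa.trans (by linarith [add_one_le_exp ε]))
  linarith [mul_add ε 1 (2 / G * |x - a|)]

lemma gauss_eq_gaussianReal : gauss = gaussianReal 0 1 := by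
  rw [gauss, gaussianReal_of_var_ne_zero 0 one_ne_zero]
  congr 1
  funext x
  rw [gaussianPDF, gaussianPDFReal, gaussPsi, NNReal.coe_one, mul_one, sub_zero,
    ← exp_log (sqrt_pos.2 two_pi_pos), ← exp_neg, log_sqrt two_pi_pos.le, ← exp_add]
  congr 2
  ring

instance isProbabilityMeasure_gauss : IsProbabilityMeasure gauss := by
  rw [gauss_eq_gaussianReal]
  infer_instance

lemma measureReal_gaussianReal_pos {m : ℝ} {v : NNReal} (hv : v ≠ 0) {s : Set ℝ}
    (hs : volume s ≠ 0) : 0 < (gaussianReal m v).real s :=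
  ENNReal.toReal_pos (fun h => hs (gaussianReal_absolutelyContinuous' m hv h))
    (measure_ne_top _ _)

lemma strictMono_gaussianReal_Iic {m : ℝ} {v : NNReal} (hv : v ≠ 0) :
    StrictMono fun a => gaussianReal m v (Iic a) := by
  intro a b hab
  dsimp only
  rw [← Iic_union_Ioc_eq_Iic hab.le, measure_union (Iic_disjoint_Ioc le_rfl) measurableSet_Ioc]
  refine ENNReal.lt_add_right (measure_ne_top _ _) fun h => ?_
  have := measureReal_gaussianReal_pos (m := m) hv (s := Ioc a b) (by simp [hab])
  simp [measureReal_def, h] at this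

lemma integrable_exp_mul_abs_sub_gaussianReal {m : ℝ} {v : NNReal} (t b : ℝ) :
    Integrable (fun x => exp (t * |x - b|)) (gaussianReal m v) := by
  have hsum : Integrable (fun x => exp (-(t * b)) * exp (t * x) + exp (t * b) * exp (-t * x))
      (gaussianReal m v) :=
    ((integrable_exp_mul_gaussianReal t).const_mul _).add
      ((integrable_exp_mul_gaussianReal (-t)).const_mul _)
  refine hsum.mono' (by fun_prop) (ae_of_all _ fun x => ?_)
  rw [norm_of_nonneg (exp_pos _).le, ← exp_add, ← exp_add]
  rcases abs_choice (x - b) with h | h <;> rw [h]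
  · rw [show t * (x - b) = -(t * b) + t * x by ring]
    linarith [exp_pos (t * b + -t * x)]
  · rw [show t * -(x - b) = t * b + -t * x by ring]
    linarith [exp_pos (-(t * b) + t * x)]

lemma integrable_exp_mul_one_add_mul_abs_sub_gauss (c t b : ℝ) :
    Integrable (fun x => exp (c * (1 + t * |x - b|))) gauss := by
  rw [gauss_eq_gaussianReal]
  refine ((integrable_exp_mul_abs_sub_gaussianReal (c * t) b).const_mul (exp c)).congr
    (ae_of_all _ fun x => ?_)
  simp only [← exp_add]
  ring_nf

lemma convexOn_sub_gaussPsi {I : Set ℝ} {ψ : ℝ → ℝ} (hψ : StrongConvexOn I 1 ψ) :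
    ConvexOn ℝ I fun x => ψ x - gaussPsi x := by
  refine ((strongConvexOn_iff_convex.1 hψ).add_const (-(log (2 * π) / 2))).congr fun x _ => ?_
  simp only [Pi.add_apply, gaussPsi, norm_eq_abs, sq_abs]
  ring

lemma volume_withDensity_indicator_eq_gauss_withDensity (I : Set ℝ) (ψ : ℝ → ℝ) :
    volume.withDensity (I.indicator fun x => ENNReal.ofReal (exp (-ψ x)))
      = gauss.withDensity (I.indicator fun x => ENNReal.ofReal (exp (-(ψ x - gaussPsi x)))) := by
  ext s hs
  rw [withDensity_apply _ hs, withDensity_apply _ hs, gauss,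
    setLIntegral_withDensity_eq_setLIntegral_mul_non_measurable₀ _
      (by simp only [gaussPsi]; fun_prop) _ hs
      (ae_of_all _ fun _ => ENNReal.ofReal_lt_top)]
  congr 1
  funext x
  by_cases hx : x ∈ I
  · simp only [Pi.mul_apply, indicator_of_mem hx]
    rw [← ENNReal.ofReal_mul (exp_pos _).le, ← exp_add]
    ring_nf
  · simp [indicator_of_notMem hx]

theorem positive_part_lp_estimate_on_interval_general (θ p : ℝ) (hp : 1 ≤ p) :
    ∃ C : ℝ, 0 < C ∧ ∃ δ₀ : ℝ, 0 < δ₀ ∧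
      ∀ (δ : ℝ), 0 < δ → δ ≤ δ₀ →
      ∀ (I : Set ℝ) (ψ : ℝ → ℝ) (a : ℝ),
        IsOpen I → Convex ℝ I → a ∈ I →
        gauss (Iic a) = ENNReal.ofReal θ →
        (∀ x ∈ I, ∀ y ∈ I, ∀ t ∈ Ioo (0:ℝ) 1,
          ψ ((1 - t) * x + t * y)
            ≤ (1 - t) * ψ x + t * ψ y - (1 / 2) * (1 - t) * t * |x - y| ^ 2) →
        IsProbabilityMeasure
          (MeasureTheory.volume.withDensity
            (I.indicator fun x => ENNReal.ofReal (Real.exp (-ψ x)))) →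
        (MeasureTheory.volume.withDensity
            (I.indicator fun x => ENNReal.ofReal (Real.exp (-ψ x)))) (Iic a ∩ I)
          = ENNReal.ofReal θ →
        Real.exp (-ψ a) ≤ Real.exp (-gaussPsi a) + δ →
        (∫ x in I, max (Real.exp (gaussPsi x - ψ x) - 1) 0 ^ p ∂gauss) ≤ C * δ := by
  by_cases hθ : ∃ a₀, gauss (Iic a₀) = ENNReal.ofReal θ
  swap
  · push Not at hθ
    exact ⟨1, one_pos, 1, one_pos, fun _ _ _ _ _ a _ _ _ ha => absurd ha (hθ a)⟩
  obtain ⟨a₀, ha₀⟩ := hθ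
  set G := min (gauss.real (Iic (a₀ - 1))) (gauss.real (Ioi (a₀ + 1)))
  have hG : 0 < G := by
    simp only [G, gauss_eq_gaussianReal]
    exact lt_min (measureReal_gaussianReal_pos one_ne_zero (by simp))
      (measureReal_gaussianReal_pos one_ne_zero (by simp))
  set c₀ := exp (gaussPsi a₀)
  have hint : Integrable (fun x => exp (p * (c₀ * (1 + 2 / G * |x - a₀|)))) gauss := by
    simpa only [mul_assoc] using integrable_exp_mul_one_add_mul_abs_sub_gauss (p * c₀) (2 / G) a₀
  refine ⟨_, integral_exp_pos hint, min 1 (G / (2 * c₀)), by positivity, ?_⟩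
  intro δ hδ hδ₀ I ψ a hIo hIc haI ha hψ hprob hcen hdef
  obtain rfl : a = a₀ := (strictMono_gaussianReal_Iic one_ne_zero).injective
    (by simpa only [gauss_eq_gaussianReal] using ha.trans ha₀.symm)
  obtain ⟨hδ1, hδG⟩ := le_min_iff.1 hδ₀
  rw [le_div_iff₀ (by positivity)] at hδG
  rw [volume_withDensity_indicator_eq_gauss_withDensity] at hprob hcen
  rw [measure_inter_conull (withDensity_indicator_apply_compl hIo.measurableSet _), ← ha] at hcen
  have hφ := convexOn_sub_gaussPsi (strongConvexOn_of_forall_mem_Ioo hIc hψ)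
  simp_rw [← neg_sub (ψ _), mul_comm _ δ]
  refine setIntegral_max_exp_sub_one_rpow_le hIo.measurableSet hδ.le hδ1 hp (fun x hx => ?_) hint
  have := hφ.neg_le_mul_of_withDensity_Iic_eq haI hcen (by positivity)
    (exp_neg_sub_le_one_add_exp_mul hdef) hG (min_le_left _ _) (min_le_right _ _) (by linarith) hx
  linarith

/-- the positive-part estimate `∫_I [e^{ψ_g - ψ} - 1]₊^p dγ ≤ C·δ`. -/
theorem positive_part_lp_estimate_on_interval (θ p : ℝ) (hθ : θ ∈ Ioo (0:ℝ) 1)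
    (hp : 1 ≤ p) :
    ∃ C : ℝ, 0 < C ∧ ∃ δ₀ : ℝ, 0 < δ₀ ∧
      ∀ (δ : ℝ), 0 < δ → δ ≤ δ₀ →
      ∀ (I : Set ℝ) (ψ : ℝ → ℝ) (a : ℝ),
        IsOpen I → Convex ℝ I → a ∈ I →
        gauss (Iic a) = ENNReal.ofReal θ →
        (∀ x ∈ I, ∀ y ∈ I, ∀ t ∈ Ioo (0:ℝ) 1,
          ψ ((1 - t) * x + t * y)
            ≤ (1 - t) * ψ x + t * ψ y - (1 / 2) * (1 - t) * t * |x - y| ^ 2) →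
        IsProbabilityMeasure
          (MeasureTheory.volume.withDensity
            (I.indicator fun x => ENNReal.ofReal (Real.exp (-ψ x)))) →
        (MeasureTheory.volume.withDensity
            (I.indicator fun x => ENNReal.ofReal (Real.exp (-ψ x)))) (Iic a ∩ I)
          = ENNReal.ofReal θ →
        Real.exp (-ψ a) ≤ Real.exp (-gaussPsi a) + δ →
        (∫ x in I, max (Real.exp (gaussPsi x - ψ x) - 1) 0 ^ p ∂gauss) ≤ C * δ :=
  positive_part_lp_estimate_on_interval_general θ p hp
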